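/- arXiv:1301.5079 — 2 statements merged into one kernel-verified Lean document; each statement's English description precedes it below -/
import Mathlib

section
/- Let E and F be finite-dimensional complex vector spaces (with their canonical topologies), let (L_n) be a sequence of linear maps from E to F converging to a linear map L, and assume dim_ℂ ker(L_n) = dim_ℂ ker(L) for all n. Then for every v ∈ ker(L) there exists a sequence (v_n) with v_n ∈ ker(L_n) for all n and v_n → v. (This is the selection principle used in the paper's Lemma to produce homomorphisms ξ_n ∈ Hom(Z_n, T_k*⊕T_k) converging to the identity.) -/
/-!
Split `E = C ⊕ ker L₀`. On `C` the limit `L₀` is injective, hence bounded below, and a small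
perturbation stays bounded below, so `L n` is injective on `C` for large `n`. The dimension
hypothesis then makes `C` a complement of `ker (L n)` as well, so `L n v = L n c` for some
`c ∈ C` with `‖c‖ ≤ 2K ‖L n v‖ → 0`, and `v - c ∈ ker (L n)` is the required approximant.
-/

open Filter Topology Module

namespace ContinuousLinearMap

variable {𝕜 E F ι : Type*} [NontriviallyNormedField 𝕜]
  [SeminormedAddCommGroup E] [NormedSpace 𝕜 E] [SeminormedAddCommGroup F] [NormedSpace 𝕜 F]

theorem eventually_antilipschitzWith_two_mul {l : Filter ι} {T : ι → E →L[𝕜] F}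
    {T₀ : E →L[𝕜] F} (hT : Tendsto T l (𝓝 T₀)) {K : NNReal} (hT₀ : AntilipschitzWith K T₀) :
    ∀ᶠ i in l, AntilipschitzWith (2 * K) (T i) := by
  have hsmall : ∀ᶠ i in l, (K : ℝ) * ‖T i - T₀‖ ≤ 1 / 2 := by
    have : Tendsto (fun i ↦ (K : ℝ) * ‖T i - T₀‖) l (𝓝 0) := by
      simpa using (tendsto_iff_norm_sub_tendsto_zero.mp hT).const_mul (K : ℝ)
    exact this.eventually_le_const (by norm_num)
  filter_upwards [hsmall] with i hi
  refine AddMonoidHomClass.antilipschitz_of_bound (T i) fun x ↦ ?_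
  have hperturb : ‖T₀ x‖ ≤ ‖T i x‖ + ‖T i - T₀‖ * ‖x‖ := calc
    ‖T₀ x‖ = ‖T i x - (T i - T₀) x‖ := by simp
    _ ≤ ‖T i x‖ + ‖(T i - T₀) x‖ := norm_sub_le _ _
    _ ≤ ‖T i x‖ + ‖T i - T₀‖ * ‖x‖ := by gcongr; exact le_opNorm _ _
  have hhalf : ‖x‖ ≤ K * ‖T i x‖ + ‖x‖ / 2 := calc
    ‖x‖ ≤ K * ‖T₀ x‖ := hT₀.le_mul_norm (map_zero T₀) x
    _ ≤ K * ‖T i x‖ + K * ‖T i - T₀‖ * ‖x‖ := by grw [hperturb, mul_add, mul_assoc]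
    _ ≤ K * ‖T i x‖ + ‖x‖ / 2 := by grw [hi]; linarith
  push_cast
  linarith

end ContinuousLinearMap

namespace LinearMap

variable {K V W : Type*} [DivisionRing K] [AddCommGroup V] [Module K V]
  [AddCommGroup W] [Module K W]

theorem ker_comp_subtype_eq_bot_iff {f : V →ₗ[K] W} {C : Submodule K V} :
    ker (f ∘ₗ C.subtype) = ⊥ ↔ Disjoint C (ker f) := by
  rw [ker_comp, Submodule.disjoint_iff_comap_eq_bot]

theorem isCompl_ker_of_injective_comp_subtype [FiniteDimensional K V] {f g : V →ₗ[K] W}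
    {C : Submodule K V} (hC : IsCompl C (ker g)) (hf : Function.Injective (f ∘ₗ C.subtype))
    (hdim : finrank K (ker f) = finrank K (ker g)) : IsCompl C (ker f) := by
  refine (Submodule.isCompl_iff_disjoint _ _ ?_).mpr ?_
  · rw [hdim, Submodule.finrank_add_eq_of_isCompl hC]
  · exact ker_comp_subtype_eq_bot_iff.mp (ker_eq_bot.mpr hf)

theorem exists_mem_eq_of_isCompl_ker (f : V →ₗ[K] W) {C : Submodule K V}
    (hC : IsCompl C (ker f)) (v : V) : ∃ c ∈ C, f c = f v := by
  obtain ⟨c, hc⟩ := (kerComplementEquivRange f hC).surjective ⟨f v, mem_range_self f v⟩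
  exact ⟨c, c.2, congrArg Subtype.val hc⟩

end LinearMap

theorem exists_seq_mem_tendsto_of_eventually_dist_le {X : Type*} [PseudoMetricSpace X]
    {S : ℕ → Set X} (hS : ∀ n, (S n).Nonempty) {x : X} {b : ℕ → ℝ}
    (hb : Tendsto b atTop (𝓝 0)) (hclose : ∀ᶠ n in atTop, ∃ y ∈ S n, dist y x ≤ b n) :
    ∃ y : ℕ → X, (∀ n, y n ∈ S n) ∧ Tendsto y atTop (𝓝 x) := by
  have hchoice : ∀ n, ∃ y ∈ S n, (∃ z ∈ S n, dist z x ≤ b n) → dist y x ≤ b n := fun n ↦ by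
    by_cases h : ∃ z ∈ S n, dist z x ≤ b n
    · obtain ⟨z, hz, hzx⟩ := h
      exact ⟨z, hz, fun _ ↦ hzx⟩
    · obtain ⟨z, hz⟩ := hS n
      exact ⟨z, hz, fun h' ↦ absurd h' h⟩
  choose y hyS hyx using hchoice
  refine ⟨y, hyS, tendsto_iff_dist_tendsto_zero.mpr ?_⟩
  exact squeeze_zero' (Eventually.of_forall fun n ↦ dist_nonneg)
    (hclose.mono fun n hn ↦ hyx n hn) hb

theorem exists_kernel_sequence_tendsto_general
    {E F : Type*} [NormedAddCommGroup E] [NormedSpace ℂ E] [FiniteDimensional ℂ E]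
    [NormedAddCommGroup F] [NormedSpace ℂ F]
    (L : ℕ → E →L[ℂ] F) (L₀ : E →L[ℂ] F)
    (hL : Tendsto L atTop (nhds L₀))
    (hdim : ∀ n, Module.finrank ℂ (LinearMap.ker (L n : E →ₗ[ℂ] F)) =
      Module.finrank ℂ (LinearMap.ker (L₀ : E →ₗ[ℂ] F)))
    (v : E) (hv : v ∈ LinearMap.ker (L₀ : E →ₗ[ℂ] F)) :
    ∃ w : ℕ → E, (∀ n, w n ∈ LinearMap.ker (L n : E →ₗ[ℂ] F)) ∧
      Tendsto w atTop (nhds v) := by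
  obtain ⟨C, hC⟩ := Submodule.exists_isCompl (LinearMap.ker (L₀ : E →ₗ[ℂ] F))
  replace hC := hC.symm
  obtain ⟨K, -, hK⟩ := LinearMap.exists_antilipschitzWith _
    (LinearMap.ker_comp_subtype_eq_bot_iff.mpr hC.disjoint)
  have hrestrict : Tendsto (fun n ↦ (L n).comp C.subtypeL) atTop (𝓝 (L₀.comp C.subtypeL)) :=
    ((continuous_id.clm_comp_const C.subtypeL).tendsto L₀).comp hL
  have hLv : Tendsto (fun n ↦ 2 * K * ‖L n v‖) atTop (𝓝 0) := by
    have h := ((ContinuousLinearMap.apply ℂ F v).continuous.tendsto L₀).comp hL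
    simpa [show L₀ v = 0 from hv] using (h.norm.const_mul (2 * K : ℝ))
  refine exists_seq_mem_tendsto_of_eventually_dist_le (fun n ↦ ⟨0, zero_mem _⟩) hLv ?_
  filter_upwards [ContinuousLinearMap.eventually_antilipschitzWith_two_mul hrestrict hK]
    with n hn
  have hCn := LinearMap.isCompl_ker_of_injective_comp_subtype hC hn.injective (hdim n)
  obtain ⟨c, hcC, hc : L n c = L n v⟩ := LinearMap.exists_mem_eq_of_isCompl_ker _ hCn v
  refine ⟨v - c, by simp [hc], ?_⟩
  simpa [dist_eq_norm, hc] using hn.le_mul_norm (map_zero _) ⟨c, hcC⟩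

/-- if a sequence of linear maps `L n : E → F` between finite-dimensional
complex vector spaces converges to `L₀` and all kernels have the same dimension as the
kernel of `L₀`, then every `v ∈ ker L₀` is the limit of a sequence `w n ∈ ker (L n)`. -/
theorem exists_kernel_sequence_tendsto
    {E F : Type*} [NormedAddCommGroup E] [NormedSpace ℂ E] [FiniteDimensional ℂ E]
    [NormedAddCommGroup F] [NormedSpace ℂ F] [FiniteDimensional ℂ F]
    (L : ℕ → E →L[ℂ] F) (L₀ : E →L[ℂ] F)
    (hL : Tendsto L atTop (nhds L₀))
    (hdim : ∀ n, Module.finrank ℂ (LinearMap.ker (L n : E →ₗ[ℂ] F)) =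
      Module.finrank ℂ (LinearMap.ker (L₀ : E →ₗ[ℂ] F)))
    (v : E) (hv : v ∈ LinearMap.ker (L₀ : E →ₗ[ℂ] F)) :
    ∃ w : ℕ → E, (∀ n, w n ∈ LinearMap.ker (L n : E →ₗ[ℂ] F)) ∧
      Tendsto w atTop (nhds v) :=
  exists_kernel_sequence_tendsto_general L L₀ hL hdim v hv
end

section
/- Suppose (Z^{(n)}) is a sequence in E_V converging to a point M ∈ E_V (both for the same family V), and suppose that for every n the representation Z^{(n)} is NOT isomorphic to M, i.e. no f ∈ Hom(Z^{(n)}, M) has all components f_i invertible. Then for all sufficiently large n one has the strict inequalities dim_ℂ Hom(Z^{(n)}, M) < dim_ℂ Hom(M, M) and dim_ℂ Hom(M, Z^{(n)}) < dim_ℂ Hom(M, M). -/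
/-!
`Hom(B, C)` is the kernel of the linear map `f ↦ (f (t h) * B h - C h * f (s h))_h`, which depends
continuously on `(B, C)`. If a perturbation `T` of a linear map `A` has a kernel at least as large
as `ker A`, then `ker T` is a complement of any fixed complement of `ker A`, and it contains a
vector close to any given vector of `ker A`. Applied to `A` the map for `(M, M)` and the vector
`1 ∈ Hom(M, M)`, this yields, for large `n`, an intertwiner between `Z n` and `M` close to the
identity, hence invertible; inverting it if necessary gives an isomorphism `Z n ≅ M`.
-/

open Filter Module Topology

/-- The space of intertwiners `Hom(B, C)` between two representations (given in matrix
form) of a quiver with vertices `I`, arrows `Ω`, and source/target maps `s`, `t`,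
both on the same family of vector spaces of dimensions `d`. -/
noncomputable def homSpace {I Ω : Type*} [Fintype I] [Fintype Ω] (s t : Ω → I) (d : I → ℕ)
    (B C : ∀ h : Ω, Matrix (Fin (d (t h))) (Fin (d (s h))) ℂ) :
    Submodule ℂ (∀ i : I, Matrix (Fin (d i)) (Fin (d i)) ℂ) where
  carrier := {f | ∀ h : Ω, f (t h) * B h = C h * f (s h)}
  add_mem' := by
    intro a b ha hb h
    simp only [Pi.add_apply, Matrix.add_mul, Matrix.mul_add, ha h, hb h]
  zero_mem' := by
    intro h
    simp
  smul_mem' := by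
    intro c f hf h
    simp only [Pi.smul_apply, Matrix.smul_mul, Matrix.mul_smul, hf h]


lemma Submodule.isCompl_of_disjoint_of_finrank_le {K V : Type*} [DivisionRing K]
    [AddCommGroup V] [Module K V] [FiniteDimensional K V] {U U' W : Submodule K V}
    (hU : IsCompl U W) (hU' : Disjoint U' W) (hdim : finrank K U ≤ finrank K U') :
    IsCompl U' W := by
  refine (Submodule.isCompl_iff_disjoint U' W ?_).mpr hU'
  rw [← Submodule.finrank_add_eq_of_isCompl hU]
  omega

section KernelPerturbation

open LinearMap

variable {𝕜 X Y : Type*} [NontriviallyNormedField 𝕜]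
  [NormedAddCommGroup X] [NormedSpace 𝕜 X] [NormedAddCommGroup Y] [NormedSpace 𝕜 Y]

lemma norm_le_two_mul_norm_apply_of_norm_sub_le {A T : X →L[𝕜] Y} {K : Submodule 𝕜 X} {C : ℝ}
    (hC₀ : 0 ≤ C) (hC : ∀ w ∈ K, ‖w‖ ≤ C * ‖A w‖) (hT : ‖T - A‖ * C ≤ 1 / 2) :
    ∀ w ∈ K, ‖w‖ ≤ 2 * C * ‖T w‖ := by
  intro w hw
  have hAw : ‖A w‖ ≤ ‖T w‖ + ‖T - A‖ * ‖w‖ := calc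
    ‖A w‖ ≤ ‖T w‖ + ‖(T - A) w‖ := by
      simpa [norm_sub_rev] using norm_le_norm_add_norm_sub' (A w) (T w)
    _ ≤ ‖T w‖ + ‖T - A‖ * ‖w‖ := by gcongr; exact (T - A).le_opNorm w
  nlinarith [hC w hw, mul_le_mul_of_nonneg_left hAw hC₀, norm_nonneg w]

variable [FiniteDimensional 𝕜 X]

/-- The kernel of `T` is a complement of `K`, and the `K`-component `w` of `v` satisfies
`T w = (T - A) v`. -/
lemma exists_mem_ker_norm_sub_le {A T : X →L[𝕜] Y} {K : Submodule 𝕜 X}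
    (hK : IsCompl (ker A.toLinearMap) K) {C : ℝ} (hC₀ : 0 ≤ C)
    (hC : ∀ w ∈ K, ‖w‖ ≤ C * ‖A w‖) (hT : ‖T - A‖ * C ≤ 1 / 2)
    (hdim : finrank 𝕜 (ker A.toLinearMap) ≤ finrank 𝕜 (ker T.toLinearMap))
    {v : X} (hv : v ∈ ker A.toLinearMap) :
    ∃ f ∈ ker T.toLinearMap, ‖f - v‖ ≤ 2 * C * ‖T - A‖ * ‖v‖ := by
  have hTK := norm_le_two_mul_norm_apply_of_norm_sub_le hC₀ hC hT
  have hdisj : Disjoint (ker T.toLinearMap) K := by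
    refine Submodule.disjoint_def.mpr fun x (hxT : T x = 0) hxK => ?_
    simpa [hxT] using hTK x hxK
  have hcompl := Submodule.isCompl_of_disjoint_of_finrank_le hK hdisj hdim
  have hv' : v ∈ ker T.toLinearMap ⊔ K := by rw [hcompl.sup_eq_top]; exact Submodule.mem_top
  obtain ⟨f, hf, w, hw, rfl⟩ := Submodule.mem_sup.mp hv'
  refine ⟨f, hf, ?_⟩
  have hTw : T w = (T - A) (f + w) := by
    rw [_root_.sub_apply, show A (f + w) = 0 from hv, map_add, show T f = 0 from hf]
    simp
  calc ‖f - (f + w)‖ = ‖w‖ := by simp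
    _ ≤ 2 * C * ‖T w‖ := hTK w hw
    _ ≤ 2 * C * (‖T - A‖ * ‖f + w‖) := by rw [hTw]; gcongr; exact (T - A).le_opNorm _
    _ = 2 * C * ‖T - A‖ * ‖f + w‖ := by ring

variable [CompleteSpace 𝕜]

lemma exists_norm_le_mul_norm_apply_of_disjoint_ker {A : X →L[𝕜] Y} {K : Submodule 𝕜 X}
    (hK : Disjoint (ker A.toLinearMap) K) : ∃ C : ℝ, 0 ≤ C ∧ ∀ w ∈ K, ‖w‖ ≤ C * ‖A w‖ := by
  have hinj : ker (A.toLinearMap ∘ₗ K.subtype) = ⊥ := by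
    rw [ker_comp, ← Submodule.disjoint_iff_comap_eq_bot]
    exact hK.symm
  obtain ⟨C, -, hC⟩ := LinearMap.exists_antilipschitzWith _ hinj
  refine ⟨C, C.2, fun w hw => ?_⟩
  simpa using hC.le_mul_dist ⟨w, hw⟩ 0

lemma eventually_exists_mem_ker_mem_nhds {α : Type*} {l : Filter α} {T : α → X →L[𝕜] Y}
    {A : X →L[𝕜] Y} (hT : Tendsto T l (𝓝 A)) {v : X} (hv : v ∈ ker A.toLinearMap)
    {U : Set X} (hU : U ∈ 𝓝 v) :
    ∀ᶠ x in l, finrank 𝕜 (ker A.toLinearMap) ≤ finrank 𝕜 (ker (T x).toLinearMap) →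
      ∃ f ∈ ker (T x).toLinearMap, f ∈ U := by
  obtain ⟨K, hK⟩ := Submodule.exists_isCompl (ker A.toLinearMap)
  obtain ⟨C, hC₀, hC⟩ := exists_norm_le_mul_norm_apply_of_disjoint_ker hK.disjoint
  obtain ⟨ε, hε, hball⟩ := Metric.mem_nhds_iff.mp hU
  have hsmall : Tendsto (fun x => ‖T x - A‖) l (𝓝 0) := tendsto_iff_norm_sub_tendsto_zero.mp hT
  have hbound : Tendsto (fun x => ‖T x - A‖ * C) l (𝓝 0) := by simpa using hsmall.mul_const C
  have hdist : Tendsto (fun x => 2 * C * ‖T x - A‖ * ‖v‖) l (𝓝 0) := by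
    simpa using (hsmall.const_mul (2 * C)).mul_const ‖v‖
  filter_upwards [hbound.eventually_le_const (by norm_num : (0 : ℝ) < 1 / 2),
    hdist.eventually_lt_const hε] with x hxT hxv hdim
  obtain ⟨f, hf, hfv⟩ := exists_mem_ker_norm_sub_le hK hC₀ hC hxT hdim hv
  exact ⟨f, hf, hball (mem_ball_iff_norm.mpr (hfv.trans_lt hxv))⟩

end KernelPerturbation

theorem Matrix.isOpen_setOf_isUnit {n 𝕜 : Type*} [Fintype n] [DecidableEq n] [Field 𝕜]
    [TopologicalSpace 𝕜] [IsTopologicalRing 𝕜] [T1Space 𝕜] :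
    IsOpen {A : Matrix n n 𝕜 | IsUnit A} := by
  simp only [Matrix.isUnit_iff_isUnit_det, isUnit_iff_ne_zero]
  exact isOpen_ne_fun continuous_id.matrix_det continuous_const

theorem isOpen_setOf_forall_isUnit {ι 𝕜 : Type*} {n : ι → Type*} [Finite ι]
    [∀ i, Fintype (n i)] [∀ i, DecidableEq (n i)] [Field 𝕜] [TopologicalSpace 𝕜]
    [IsTopologicalRing 𝕜] [T1Space 𝕜] :
    IsOpen {A : ∀ i, Matrix (n i) (n i) 𝕜 | ∀ i, IsUnit (A i)} := by
  rw [Set.ofPred_forall]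
  exact isOpen_iInter_of_finite fun i =>
    Matrix.isOpen_setOf_isUnit.preimage (f := fun A : ∀ i, Matrix (n i) (n i) 𝕜 => A i)
      (continuous_apply i)

section Quiver

variable {I Ω : Type*} [Fintype I] [Fintype Ω] (s t : Ω → I) (d : I → ℕ)

theorem one_mem_homSpace (B : ∀ h : Ω, Matrix (Fin (d (t h))) (Fin (d (s h))) ℂ) :
    1 ∈ homSpace s t d B B := fun h => by simp

theorem inv_mem_homSpace {B C : ∀ h : Ω, Matrix (Fin (d (t h))) (Fin (d (s h))) ℂ}
    {f : ∀ i : I, Matrix (Fin (d i)) (Fin (d i)) ℂ} (hf : f ∈ homSpace s t d B C)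
    (hu : ∀ i, IsUnit (f i)) : (fun i => (f i)⁻¹) ∈ homSpace s t d C B := by
  have hdet i : IsUnit (f i).det := (Matrix.isUnit_iff_isUnit_det _).mp (hu i)
  intro h
  calc (f (t h))⁻¹ * C h = (f (t h))⁻¹ * (C h * f (s h)) * (f (s h))⁻¹ := by
        rw [Matrix.mul_assoc, Matrix.mul_assoc, Matrix.mul_nonsing_inv _ (hdet _), Matrix.mul_one]
    _ = (f (t h))⁻¹ * (f (t h) * B h) * (f (s h))⁻¹ := by rw [hf h]
    _ = B h * (f (s h))⁻¹ := by
        rw [← Matrix.mul_assoc, Matrix.nonsing_inv_mul _ (hdet _), Matrix.one_mul]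

-- Matrices carry no global norm; any norm inducing the product topology will do.
attribute [local instance] Matrix.normedAddCommGroup Matrix.normedSpace

noncomputable def intertwinerDefect (B C : ∀ h : Ω, Matrix (Fin (d (t h))) (Fin (d (s h))) ℂ) :
    (∀ i : I, Matrix (Fin (d i)) (Fin (d i)) ℂ) →L[ℂ]
      (∀ h : Ω, Matrix (Fin (d (t h))) (Fin (d (s h))) ℂ) :=
  LinearMap.toContinuousLinearMap
    { toFun f h := f (t h) * B h - C h * f (s h)
      map_add' f g := by
        ext1 h
        simp only [Pi.add_apply, Matrix.add_mul, Matrix.mul_add]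
        abel
      map_smul' c f := by
        ext1 h
        simp only [Pi.smul_apply, Matrix.smul_mul, Matrix.mul_smul, RingHom.id_apply, smul_sub] }

theorem homSpace_eq_ker_intertwinerDefect
    (B C : ∀ h : Ω, Matrix (Fin (d (t h))) (Fin (d (s h))) ℂ) :
    homSpace s t d B C = LinearMap.ker (intertwinerDefect s t d B C).toLinearMap := by
  ext f
  simp [homSpace, intertwinerDefect, funext_iff, sub_eq_zero]

theorem tendsto_intertwinerDefect {α : Type*} {l : Filter α}
    {B C : α → ∀ h : Ω, Matrix (Fin (d (t h))) (Fin (d (s h))) ℂ}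
    {M N : ∀ h : Ω, Matrix (Fin (d (t h))) (Fin (d (s h))) ℂ}
    (hB : Tendsto B l (𝓝 M)) (hC : Tendsto C l (𝓝 N)) :
    Tendsto (fun x => intertwinerDefect s t d (B x) (C x)) l
      (𝓝 (intertwinerDefect s t d M N)) := by
  have hcont : Continuous fun BC : (∀ h : Ω, Matrix (Fin (d (t h))) (Fin (d (s h))) ℂ) ×
      (∀ h : Ω, Matrix (Fin (d (t h))) (Fin (d (s h))) ℂ) =>
        intertwinerDefect s t d BC.1 BC.2 :=
    continuous_clm_apply.mpr fun f => continuous_pi fun h => by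
      change Continuous fun BC : (∀ h : Ω, Matrix (Fin (d (t h))) (Fin (d (s h))) ℂ) ×
          (∀ h : Ω, Matrix (Fin (d (t h))) (Fin (d (s h))) ℂ) =>
        f (t h) * BC.1 h - BC.2 h * f (s h)
      fun_prop
  exact ((hcont.tendsto (M, N)).comp (hB.prodMk_nhds hC) :)

theorem eventually_exists_isUnit_mem_homSpace {α : Type*} {l : Filter α}
    {B C : α → ∀ h : Ω, Matrix (Fin (d (t h))) (Fin (d (s h))) ℂ}
    {M : ∀ h : Ω, Matrix (Fin (d (t h))) (Fin (d (s h))) ℂ}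
    (hB : Tendsto B l (𝓝 M)) (hC : Tendsto C l (𝓝 M)) :
    ∀ᶠ x in l, finrank ℂ (homSpace s t d M M) ≤ finrank ℂ (homSpace s t d (B x) (C x)) →
      ∃ f ∈ homSpace s t d (B x) (C x), ∀ i, IsUnit (f i) := by
  have hT := tendsto_intertwinerDefect s t d hB hC
  have hU : {f : ∀ i : I, Matrix (Fin (d i)) (Fin (d i)) ℂ | ∀ i, IsUnit (f i)} ∈ 𝓝 1 := by
    exact isOpen_setOf_forall_isUnit.mem_nhds fun i => isUnit_one
  have hone := one_mem_homSpace s t d M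
  rw [homSpace_eq_ker_intertwinerDefect] at hone
  filter_upwards [eventually_exists_mem_ker_mem_nhds hT hone hU] with x hx hdim
  rw [homSpace_eq_ker_intertwinerDefect, homSpace_eq_ker_intertwinerDefect] at hdim
  simpa only [homSpace_eq_ker_intertwinerDefect] using hx hdim

end Quiver

/-- if `Z n → M` and no `Z n` is isomorphic to `M`, then for all
sufficiently large `n` one has the strict inequalities
`dim Hom(Z n, M) < dim Hom(M, M)` and `dim Hom(M, Z n) < dim Hom(M, M)`. -/
theorem finrank_hom_lt_of_not_iso
    {I Ω : Type*} [Fintype I] [Fintype Ω] (s t : Ω → I) (d : I → ℕ)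
    (Z : ℕ → ∀ h : Ω, Matrix (Fin (d (t h))) (Fin (d (s h))) ℂ)
    (M : ∀ h : Ω, Matrix (Fin (d (t h))) (Fin (d (s h))) ℂ)
    (hZ : Tendsto Z atTop (nhds M))
    (hniso : ∀ n, ¬ ∃ f ∈ homSpace s t d (Z n) M, ∀ i : I, IsUnit (f i)) :
    ∀ᶠ n in atTop,
      Module.finrank ℂ (homSpace s t d (Z n) M) <
        Module.finrank ℂ (homSpace s t d M M) ∧
      Module.finrank ℂ (homSpace s t d M (Z n)) <
        Module.finrank ℂ (homSpace s t d M M) := by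
  have hM : Tendsto (fun _ : ℕ => M) atTop (𝓝 M) := tendsto_const_nhds
  filter_upwards [eventually_exists_isUnit_mem_homSpace s t d hZ hM,
    eventually_exists_isUnit_mem_homSpace s t d hM hZ] with n hZM hMZ
  refine ⟨lt_of_not_ge fun h => hniso n (hZM h), lt_of_not_ge fun h => ?_⟩
  obtain ⟨f, hf, hu⟩ := hMZ h
  exact hniso n ⟨_, inv_mem_homSpace s t d hf hu, fun i => Matrix.isUnit_nonsing_inv_iff.mpr (hu i)⟩
end
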